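/- arXiv:math/0701410 — 3 statements merged into one kernel-verified Lean document; each statement's English description precedes it below -/
import Mathlib

section
/- Let A₂₂ be an operator on a Hilbert space H⁻ such that −A₂₂ generates a bounded holomorphic semigroup (so ‖(A₂₂ − μ)⁻¹‖ ≤ C/|μ| for Re μ < 0, |μ| ≥ δ), and let G(μ₀) = A₁₂(A₂₂ − μ₀)⁻¹ be compact for some μ₀ with Re μ₀ < 0. Then G(μ) = G(μ₀)(A₂₂ − μ₀)(A₂₂ − μ)⁻¹ is well defined for all μ with Re μ < 0, and ‖G(μ)‖ → 0 as |μ| → ∞ uniformly in the half-plane Re μ < 0. -/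
/-!
Write `T μ = 1 + (μ - μ₀) R μ`, so that `G(μ) = G₀ T μ`. The resolvent identity `R μ₀ T μ = R μ`
gives `(T μ)† (R μ₀)† = (R μ)† = O(1/|μ|)`: the family `(T μ)†` is bounded and tends to zero on
the range of `(R μ₀)†`, which is dense because `R μ₀` is injective, hence uniformly on compact sets.
Since `‖G₀ T‖² = ‖T† (G₀† G₀) T‖` and `G₀† G₀` is compact, this forces `‖G(μ)‖ → 0`.
-/

open Filter Topology Metric ContinuousLinearMap

section UniformConvergence

variable {ι 𝕜 E F G : Type*} {l : Filter ι}

theorem eventually_forall_norm_apply_lt_of_dense [NontriviallyNormedField 𝕜]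
    [NormedAddCommGroup E] [NormedSpace 𝕜 E] [NormedAddCommGroup F] [NormedSpace 𝕜 F]
    {S : ι → E →L[𝕜] F} {C : ℝ} (hS : ∀ᶠ i in l, ‖S i‖ ≤ C)
    {D : Set E} (hD : Dense D) (hSD : ∀ x ∈ D, Tendsto (fun i ↦ S i x) l (𝓝 0))
    {K : Set E} (hK : IsCompact K) {ε : ℝ} (hε : 0 < ε) :
    ∀ᶠ i in l, ∀ y ∈ K, ‖S i y‖ < ε := by
  set ρ := ε / (2 * (|C| + 1))
  have hρ : 0 < ρ := by positivity
  have hCρ : C * ρ ≤ ε / 2 := by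
    calc C * ρ ≤ (|C| + 1) * ρ := by gcongr; linarith [le_abs_self C]
      _ = ε / 2 := by simp only [ρ]; field_simp
  have hcover : K ⊆ ⋃ x ∈ D, ball x ρ := fun y _ ↦ by
    obtain ⟨x, hx, hxy⟩ := hD.exists_dist_lt y hρ
    exact Set.mem_biUnion hx (mem_ball.2 hxy)
  obtain ⟨t, htD, ht, hKt⟩ :=
    hK.elim_finite_subcover_image (fun _ _ ↦ isOpen_ball) hcover
  have hsmall : ∀ᶠ i in l, ∀ x ∈ t, ‖S i x‖ < ε / 2 :=
    ht.eventually_all.2 fun x hx ↦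
      (tendsto_zero_iff_norm_tendsto_zero.1 (hSD x (htD hx))).eventually
        (gt_mem_nhds (half_pos hε))
  filter_upwards [hS, hsmall] with i hSi hSit y hy
  obtain ⟨x, hxt, hyx⟩ := Set.mem_iUnion₂.1 (hKt hy)
  calc ‖S i y‖ = ‖S i x + S i (y - x)‖ := by rw [← map_add, add_sub_cancel]
    _ ≤ ‖S i x‖ + ‖S i‖ * ‖y - x‖ := norm_add_le_of_le le_rfl (le_opNorm _ _)
    _ ≤ ‖S i x‖ + C * ρ := by
        gcongr
        · exact (norm_nonneg _).trans hSi
        · rw [← dist_eq_norm]; exact (mem_ball.1 hyx).le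
    _ < ε / 2 + C * ρ := by gcongr; exact hSit x hxt
    _ ≤ ε := by linarith

theorem tendsto_comp_of_isCompactOperator [RCLike 𝕜]
    [NormedAddCommGroup E] [NormedSpace 𝕜 E] [NormedAddCommGroup F] [NormedSpace 𝕜 F]
    [NormedAddCommGroup G] [NormedSpace 𝕜 G]
    {S : ι → E →L[𝕜] F} {C : ℝ} (hS : ∀ᶠ i in l, ‖S i‖ ≤ C)
    {D : Set E} (hD : Dense D) (hSD : ∀ x ∈ D, Tendsto (fun i ↦ S i x) l (𝓝 0))
    {K : G →L[𝕜] E} (hK : IsCompactOperator K) :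
    Tendsto (fun i ↦ (S i).comp K) l (𝓝 0) := by
  refine Metric.tendsto_nhds.2 fun ε hε ↦ ?_
  filter_upwards [eventually_forall_norm_apply_lt_of_dense hS hD hSD
    (hK.isCompact_closure_image_closedBall 1) (half_pos hε)] with i hi
  rw [dist_zero_right]
  refine (opNorm_le_of_unit_norm (half_pos hε).le fun y hy ↦ ?_).trans_lt (half_lt_self hε)
  exact (hi _ (subset_closure ⟨y, mem_closedBall_zero_iff.2 hy.le, rfl⟩)).le

end UniformConvergence

section Hilbert

variable {ι 𝕜 E F G : Type*} [RCLike 𝕜] {l : Filter ι}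
  [NormedAddCommGroup E] [InnerProductSpace 𝕜 E] [CompleteSpace E]
  [NormedAddCommGroup F] [InnerProductSpace 𝕜 F] [CompleteSpace F]
  [NormedAddCommGroup G] [InnerProductSpace 𝕜 G] [CompleteSpace G]

theorem ContinuousLinearMap.denseRange_adjoint_of_injective {A : E →L[𝕜] F}
    (hA : Function.Injective A) : DenseRange (adjoint A) := by
  have hclosure := A.orthogonal_ker
  rw [LinearMap.ker_eq_bot.2 hA, Submodule.bot_orthogonal_eq_top, eq_comm,
    ← Submodule.dense_iff_topologicalClosure_eq_top] at hclosure
  exact hclosure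

theorem tendsto_isCompactOperator_comp {G₀ : E →L[𝕜] F} (hG₀ : IsCompactOperator G₀)
    {T : ι → G →L[𝕜] E} {C : ℝ} (hT : ∀ᶠ i in l, ‖T i‖ ≤ C)
    {D : Set E} (hD : Dense D) (hTD : ∀ x ∈ D, Tendsto (fun i ↦ adjoint (T i) x) l (𝓝 0)) :
    Tendsto (fun i ↦ G₀.comp (T i)) l (𝓝 0) := by
  have hT' : ∀ᶠ i in l, ‖adjoint (T i)‖ ≤ C := by
    simpa only [LinearIsometryEquiv.norm_map] using hT
  have hlim : Tendsto (fun i ↦ (adjoint (T i)).comp ((adjoint G₀).comp G₀)) l (𝓝 0) :=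
    tendsto_comp_of_isCompactOperator hT' hD hTD (hG₀.clm_comp (adjoint G₀))
  have hsq : Tendsto (fun i ↦ ‖G₀.comp (T i)‖ * ‖G₀.comp (T i)‖) l (𝓝 0) := by
    refine squeeze_zero_norm' ?_ (by simpa using (tendsto_norm_zero.comp hlim).mul_const C)
    filter_upwards [hT] with i hTi
    calc ‖‖G₀.comp (T i)‖ * ‖G₀.comp (T i)‖‖
        = ‖((adjoint (T i)).comp ((adjoint G₀).comp G₀)).comp (T i)‖ := by
          rw [Real.norm_eq_abs, abs_mul_self, ← norm_adjoint_comp_self]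
          simp only [adjoint_comp, comp_assoc]
      _ ≤ ‖(adjoint (T i)).comp ((adjoint G₀).comp G₀)‖ * C :=
          (opNorm_comp_le _ _).trans (by gcongr)
  rw [tendsto_zero_iff_norm_tendsto_zero]
  simpa [Real.sqrt_mul_self (norm_nonneg _)] using hsq.sqrt

end Hilbert

section Resolvent

variable {𝕜 E F : Type*} [NontriviallyNormedField 𝕜]
  [NormedAddCommGroup E] [NormedSpace 𝕜 E] [NormedAddCommGroup F] [NormedSpace 𝕜 F]

theorem injective_of_resolvent {A : E →ₗ.[𝕜] E} {R : E →L[𝕜] E} {μ : 𝕜}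
    (hRmem : ∀ y, R y ∈ A.domain) (hR : ∀ y, A ⟨R y, hRmem y⟩ - μ • R y = y) :
    Function.Injective R := by
  intro y y' h
  have hdom : (⟨R y, hRmem y⟩ : A.domain) = ⟨R y', hRmem y'⟩ := Subtype.ext h
  rw [← hR y, ← hR y', hdom, h]

theorem resolvent_comp_id_add_smul {A : E →ₗ.[𝕜] E} {R₀ R : E →L[𝕜] E} {μ₀ μ : 𝕜}
    (hRmem : ∀ y, R y ∈ A.domain) (hR : ∀ y, A ⟨R y, hRmem y⟩ - μ • R y = y)
    (hR₀ : ∀ x : A.domain, R₀ (A x - μ₀ • (x : E)) = x) :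
    R₀.comp (ContinuousLinearMap.id 𝕜 E + (μ - μ₀) • R) = R := by
  ext y
  have hshift : A ⟨R y, hRmem y⟩ - μ₀ • R y = y + (μ - μ₀) • R y := by
    calc A ⟨R y, hRmem y⟩ - μ₀ • R y = (A ⟨R y, hRmem y⟩ - μ • R y) + (μ - μ₀) • R y := by
          rw [sub_smul]; abel
      _ = y + (μ - μ₀) • R y := by rw [hR y]
  simpa [hshift] using hR₀ ⟨R y, hRmem y⟩

theorem tendsto_apply_zero_of_norm_le_div {l : Filter 𝕜} (hl : Tendsto norm l atTop)
    {S : 𝕜 → E →L[𝕜] F} {C : ℝ} (hS : ∀ᶠ μ in l, ‖S μ‖ ≤ C / ‖μ‖) (x : E) :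
    Tendsto (fun μ ↦ S μ x) l (𝓝 0) := by
  have hdecay : Tendsto (fun μ ↦ C / ‖μ‖ * ‖x‖) l (𝓝 0) := by
    simpa using ((tendsto_const_nhds (x := C)).div_atTop hl).mul_const ‖x‖
  refine squeeze_zero_norm' ?_ hdecay
  filter_upwards [hS] with μ hSμ
  exact (le_opNorm _ _).trans (by gcongr)

theorem eventually_norm_id_add_smul_le {l : Filter 𝕜} (hl : Tendsto norm l atTop)
    {S : 𝕜 → E →L[𝕜] E} {C : ℝ} (hS : ∀ᶠ μ in l, ‖S μ‖ ≤ C / ‖μ‖) (μ₀ : 𝕜) :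
    ∀ᶠ μ in l, ‖ContinuousLinearMap.id 𝕜 E + (μ - μ₀) • S μ‖ ≤ 1 + 2 * C := by
  filter_upwards [hS, hl.eventually_ge_atTop (max ‖μ₀‖ 1)] with μ hSμ hμ
  have hμpos : 0 < ‖μ‖ := zero_lt_one.trans_le ((le_max_right _ _).trans hμ)
  have hμS : ‖μ‖ * ‖S μ‖ ≤ C := by rwa [le_div_iff₀' hμpos] at hSμ
  have hμμ₀ : ‖μ - μ₀‖ ≤ 2 * ‖μ‖ := by
    linarith [norm_sub_le μ μ₀, (le_max_left _ _).trans hμ]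
  calc ‖ContinuousLinearMap.id 𝕜 E + (μ - μ₀) • S μ‖ ≤ 1 + ‖μ - μ₀‖ * ‖S μ‖ := by
        grw [norm_add_le, norm_id_le, norm_smul]
    _ ≤ 1 + 2 * ‖μ‖ * ‖S μ‖ := by gcongr
    _ ≤ 1 + 2 * C := by linarith

end Resolvent

variable {Hp Hm : Type*}
  [NormedAddCommGroup Hp] [InnerProductSpace ℂ Hp] [CompleteSpace Hp]
  [NormedAddCommGroup Hm] [InnerProductSpace ℂ Hm] [CompleteSpace Hm]

theorem stmt7_general (A22 : Hm →ₗ.[ℂ] Hm)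
    (R : ℂ → (Hm →L[ℂ] Hm))
    (hRmem : ∀ μ : ℂ, μ.re < 0 → ∀ y : Hm, R μ y ∈ A22.domain)
    (hRright : ∀ (μ : ℂ) (h : μ.re < 0) (y : Hm),
      A22 ⟨R μ y, hRmem μ h y⟩ - μ • R μ y = y)
    (hRleft : ∀ μ : ℂ, μ.re < 0 → ∀ x : A22.domain,
      R μ (A22 x - μ • (x : Hm)) = (x : Hm))
    (C δ : ℝ)
    (hRbound : ∀ μ : ℂ, μ.re < 0 → δ ≤ ‖μ‖ → ‖R μ‖ ≤ C / ‖μ‖)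
    (μ0 : ℂ) (hμ0 : μ0.re < 0)
    (G0 : Hm →L[ℂ] Hp) (hG0 : IsCompactOperator G0) :
    ∀ ε > (0:ℝ), ∃ r : ℝ, ∀ μ : ℂ, μ.re < 0 → r < ‖μ‖ →
      ‖G0 + (μ - μ0) • (G0.comp (R μ))‖ < ε := by
  set l : Filter ℂ := comap norm atTop ⊓ 𝓟 {μ | μ.re < 0}
  have hl : Tendsto norm l atTop := tendsto_comap.mono_left inf_le_left
  have hleft : ∀ᶠ μ in l, μ.re < 0 := mem_inf_of_right (mem_principal_self _)
  have hRl : ∀ᶠ μ in l, ‖R μ‖ ≤ C / ‖μ‖ := by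
    filter_upwards [hleft, hl.eventually_ge_atTop δ] with μ hμ hδμ using hRbound μ hμ hδμ
  have hlim :
      Tendsto (fun μ ↦ G0.comp (ContinuousLinearMap.id ℂ Hm + (μ - μ0) • R μ)) l (𝓝 0) := by
    refine tendsto_isCompactOperator_comp hG0 (eventually_norm_id_add_smul_le hl hRl μ0)
      (denseRange_adjoint_of_injective (injective_of_resolvent _ (hRright μ0 hμ0))) ?_
    rintro _ ⟨z, rfl⟩
    refine (tendsto_apply_zero_of_norm_le_div hl (S := fun μ ↦ adjoint (R μ))
      (by simpa only [LinearIsometryEquiv.norm_map] using hRl) z).congr' ?_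
    filter_upwards [hleft] with μ hμ
    rw [← comp_apply, ← adjoint_comp,
      resolvent_comp_id_add_smul _ (hRright μ hμ) (hRleft μ0 hμ0)]
  intro ε hε
  obtain ⟨r, -, hr⟩ := ((atTop_basis_Ioi.comap norm).inf_principal _).eventually_iff.1
    (Metric.tendsto_nhds.1 hlim ε hε)
  refine ⟨r, fun μ hμ hrμ ↦ ?_⟩
  simpa [comp_add, comp_smul] using hr ⟨hrμ, hμ⟩

/-- Suppose `−A₂₂` generates a bounded holomorphic semigroup, encoded by a resolvent
family `R μ = (A₂₂ − μ)⁻¹` defined for `Re μ < 0` with `‖R μ‖ ≤ C/|μ|` for `|μ| ≥ δ`,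
and let `G₀ = A₁₂(A₂₂ − μ₀)⁻¹` be compact for some `μ₀` with `Re μ₀ < 0`.  Then
`G(μ) = G₀ (A₂₂ − μ₀)(A₂₂ − μ)⁻¹ = G₀ + (μ − μ₀) G₀ (A₂₂ − μ)⁻¹` is defined for all
`Re μ < 0` and `‖G(μ)‖ → 0` as `|μ| → ∞` uniformly in the left half-plane. -/
theorem stmt7 (A22 : Hm →ₗ.[ℂ] Hm) (hdense : Dense (A22.domain : Set Hm))
    (R : ℂ → (Hm →L[ℂ] Hm))
    (hRmem : ∀ μ : ℂ, μ.re < 0 → ∀ y : Hm, R μ y ∈ A22.domain)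
    (hRright : ∀ (μ : ℂ) (h : μ.re < 0) (y : Hm),
      A22 ⟨R μ y, hRmem μ h y⟩ - μ • R μ y = y)
    (hRleft : ∀ μ : ℂ, μ.re < 0 → ∀ x : A22.domain,
      R μ (A22 x - μ • (x : Hm)) = (x : Hm))
    (C δ : ℝ) (hδ : 0 < δ)
    (hRbound : ∀ μ : ℂ, μ.re < 0 → δ ≤ ‖μ‖ → ‖R μ‖ ≤ C / ‖μ‖)
    (μ0 : ℂ) (hμ0 : μ0.re < 0)
    (G0 : Hm →L[ℂ] Hp) (hG0 : IsCompactOperator G0) :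
    ∀ ε > (0:ℝ), ∃ r : ℝ, ∀ μ : ℂ, μ.re < 0 → r < ‖μ‖ →
      ‖G0 + (μ - μ0) • (G0.comp (R μ))‖ < ε :=
  stmt7_general A22 R hRmem hRright hRleft C δ hRbound μ0 hμ0 G0 hG0
end

section
/- Let H = H⁺ ⊕ H⁻, let A be given by the operator matrix (A₁₁ A₁₂; A₂₁ A₂₂) with domain D⁺ ⊕ D⁻, let μ ∈ ρ(A₂₂), and set F = (A₂₂ − μ)⁻¹A₂₁, G = A₁₂(A₂₂ − μ)⁻¹, S = A₁₁ − A₁₂F. Let K : H⁺ → H⁻ be a bounded operator and L = { (x₊, Kx₊) : x₊ ∈ H⁺ }. Then L is A-invariant (i.e. A maps D⁺-graph vectors of L into L) if and only if (I − KG)(A₂₂ − μ)(F + K) x₊ = K(S − μ) x₊ for all x₊ ∈ D⁺. -/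
variable {Hp Hm : Type*}
  [NormedAddCommGroup Hp] [InnerProductSpace ℂ Hp] [CompleteSpace Hp]
  [NormedAddCommGroup Hm] [InnerProductSpace ℂ Hm] [CompleteSpace Hm]

/-- Riccati-equation characterization of invariance.  `A = (A₁₁ A₁₂; A₂₁ A₂₂)` is a
block operator matrix on `H⁺ ⊕ H⁻` with domain `D⁺ ⊕ D⁻`, `μ ∈ ρ(A₂₂)` with resolvent
`R = (A₂₂ − μ)⁻¹`, `F = R A₂₁`, `G = A₁₂ R`, `S = A₁₁ − A₁₂ F`, and `K : H⁺ → H⁻` is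
bounded with `K(D⁺) ⊆ D⁻` (so that all terms are defined).  Then the graph
`L = {(x₊, Kx₊)}` is `A`-invariant (i.e. `A(x₊, Kx₊)` is again a graph vector for
every `x₊ ∈ D⁺`) iff `(I − KG)(A₂₂ − μ)(F + K)x₊ = K(S − μ)x₊` for all `x₊ ∈ D⁺`. -/
theorem stmt9 (Dp : Submodule ℂ Hp) (Dm : Submodule ℂ Hm)
    (A11 : Dp →ₗ[ℂ] Hp) (A12 : Dm →ₗ[ℂ] Hp)
    (A21 : Dp →ₗ[ℂ] Hm) (A22 : Dm →ₗ[ℂ] Hm)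
    (μ : ℂ) (R : Hm →L[ℂ] Hm)
    (hRmem : ∀ y : Hm, R y ∈ Dm)
    (hRright : ∀ y : Hm, A22 ⟨R y, hRmem y⟩ - μ • R y = y)
    (hRleft : ∀ x : Dm, R (A22 x - μ • (x : Hm)) = (x : Hm))
    (K : Hp →L[ℂ] Hm) (hK : ∀ x : Dp, K (x : Hp) ∈ Dm) :
    -- `L` is `A`-invariant:
    (∀ x : Dp, A21 x + A22 ⟨K (x : Hp), hK x⟩ =
        K (A11 x + A12 ⟨K (x : Hp), hK x⟩))
    ↔
    -- the modified Riccati equation `(I − KG)(A₂₂ − μ)(F + K) = K(S − μ)` on `D⁺`: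
    (∀ x : Dp,
      (A22 (⟨R (A21 x), hRmem _⟩ + ⟨K (x : Hp), hK x⟩) - μ • (R (A21 x) + K (x : Hp)))
        - K (A12 ⟨R ((A22 (⟨R (A21 x), hRmem _⟩ + ⟨K (x : Hp), hK x⟩)
              - μ • (R (A21 x) + K (x : Hp)))), hRmem _⟩)
      = K ((A11 x - A12 ⟨R (A21 x), hRmem _⟩) - μ • (x : Hp))) := by
  -- abbreviations
  have key : ∀ x : Dp,
      (A22 (⟨R (A21 x), hRmem _⟩ + ⟨K (x : Hp), hK x⟩) - μ • (R (A21 x) + K (x : Hp)))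
        = A21 x + (A22 ⟨K (x : Hp), hK x⟩ - μ • K (x : Hp)) := by
    intro x
    have h1 := hRright (A21 x)
    rw [map_add, smul_add]
    conv_rhs => rw [← h1]
    abel
  have Rkey : ∀ x : Dp,
      (⟨R (A21 x + (A22 ⟨K (x : Hp), hK x⟩ - μ • K (x : Hp))), hRmem _⟩ : Dm)
        = ⟨R (A21 x), hRmem _⟩ + ⟨K (x : Hp), hK x⟩ := by
    intro x
    apply Subtype.ext
    have h2 := hRleft (⟨K (x : Hp), hK x⟩ : Dm)
    show R _ = R (A21 x) + K (x : Hp)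
    rw [map_add, h2]
  constructor
  · intro h x
    rw [key x, Rkey x, map_add, map_add]
    have h' := h x
    rw [map_add] at h'
    have h2 : A21 x + A22 ⟨K (x : Hp), hK x⟩
        - (K (A11 x) + K (A12 ⟨K (x : Hp), hK x⟩)) = 0 := sub_eq_zero.mpr h'
    rw [map_sub, map_sub, map_smul, ← sub_eq_zero, ← h2]
    abel
  · intro h x
    have h' := h x
    rw [key x, Rkey x, map_add, map_add, map_sub, map_sub, map_smul] at h'
    rw [← sub_eq_zero] at h'
    rw [map_add, ← sub_eq_zero, ← h']
    abel
end

section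
/- With A, J, F, S as in the block factorization (J A + μ = J (1 G; 0 1) diag(S+μ, A₂₂−μ) (1 0; F 1)), for every x₊ ∈ D⁺ one has (S x₊, x₊) = ( J A (x₊, −F x₊), (x₊, −F x₊) ) + μ (F x₊, F x₊). Consequently, if A is dissipative in the Krein space (H, [·,·]) (i.e. Re(JAx,x) ≤ 0 on D(A)) and Re μ < 0, then S = S(μ) with domain D⁺ is dissipative in the Hilbert space H⁺. -/
/-!
Since `F x₊ = R (A21 x₊)` solves `(A22 - μ) F x₊ = A21 x₊`, the second row of `A` applied to
`(x₊, -F x₊)` is `-μ F x₊`. Hence the `J`-form of `A` at `(x₊, -F x₊)` is `(S x₊, x₊) - μ ‖F x₊‖²`,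
and dissipativity of `A` together with `Re μ < 0` bounds `Re (S x₊, x₊)` by `Re μ ‖F x₊‖² ≤ 0`.
-/

local notation "⟪" x ", " y "⟫" => @inner ℂ _ _ x y

section

variable {Ep Em : Type*}
  [NormedAddCommGroup Ep] [InnerProductSpace ℂ Ep]
  [NormedAddCommGroup Em] [InnerProductSpace ℂ Em]

/-- The Krein form `[A v, v] = (J A v, v)` of the block operator `(A11 A12; A21 A22)` at
`v = (x, y)`. -/
noncomputable def kreinForm {Dp : Submodule ℂ Ep} {Dm : Submodule ℂ Em}
    (A11 : Dp →ₗ[ℂ] Ep) (A12 : Dm →ₗ[ℂ] Ep) (A21 : Dp →ₗ[ℂ] Em) (A22 : Dm →ₗ[ℂ] Em)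
    (x : Dp) (y : Dm) : ℂ :=
  ⟪(x : Ep), A11 x + A12 y⟫ - ⟪(y : Em), A21 x + A22 y⟫

theorem kreinForm_neg_right {Dp : Submodule ℂ Ep} {Dm : Submodule ℂ Em}
    (A11 : Dp →ₗ[ℂ] Ep) (A12 : Dm →ₗ[ℂ] Ep) (A21 : Dp →ₗ[ℂ] Em) (A22 : Dm →ₗ[ℂ] Em)
    (x : Dp) (y : Dm) :
    kreinForm A11 A12 A21 A22 x (-y) =
      ⟪(x : Ep), A11 x - A12 y⟫ + ⟪(y : Em), A21 x - A22 y⟫ := by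
  simp only [kreinForm, map_neg, Submodule.coe_neg, inner_neg_left, ← sub_eq_add_neg]
  ring

theorem sub_map_resolvent_eq_neg_smul {D : Submodule ℂ Em} (T : D →ₗ[ℂ] Em) {μ : ℂ}
    {R : Em → Em} (hRmem : ∀ y, R y ∈ D) (hRright : ∀ y, T ⟨R y, hRmem y⟩ - μ • R y = y)
    (y : Em) : y - T ⟨R y, hRmem y⟩ = -(μ • R y) := by
  nth_rewrite 1 [← hRright y]
  abel

theorem re_mul_inner_self_nonpos {μ : ℂ} (hμ : μ.re ≤ 0) (v : Em) : (μ * ⟪v, v⟫).re ≤ 0 := by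
  rw [inner_self_eq_norm_sq_to_K, ← RCLike.ofReal_pow, RCLike.ofReal_eq_complex_ofReal,
    Complex.re_mul_ofReal]
  exact mul_nonpos_of_nonpos_of_nonneg hμ (sq_nonneg _)

end

variable {Hp Hm : Type*}
  [NormedAddCommGroup Hp] [InnerProductSpace ℂ Hp] [CompleteSpace Hp]
  [NormedAddCommGroup Hm] [InnerProductSpace ℂ Hm] [CompleteSpace Hm]

theorem stmt11_general (Dp : Submodule ℂ Hp) (Dm : Submodule ℂ Hm)
    (A11 : Dp →ₗ[ℂ] Hp) (A12 : Dm →ₗ[ℂ] Hp)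
    (A21 : Dp →ₗ[ℂ] Hm) (A22 : Dm →ₗ[ℂ] Hm)
    (μ : ℂ) (R : Hm →L[ℂ] Hm)
    (hRmem : ∀ y : Hm, R y ∈ Dm)
    (hRright : ∀ y : Hm, A22 ⟨R y, hRmem y⟩ - μ • R y = y) :
    -- the identity (2.6):
    (∀ x : Dp,
      (⟪(x : Hp), A11 x - A12 ⟨R (A21 x), hRmem _⟩⟫ : ℂ) =
        ((⟪(x : Hp), A11 x - A12 ⟨R (A21 x), hRmem _⟩⟫ : ℂ)
          + (⟪R (A21 x), A21 x - A22 ⟨R (A21 x), hRmem _⟩⟫ : ℂ))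
        + μ * (⟪R (A21 x), R (A21 x)⟫ : ℂ)) ∧
    -- dissipativity of `S` when `A` is `J`-dissipative and `Re μ < 0`:
    ((∀ (x : Dp) (y : Dm),
        ((⟪(x : Hp), A11 x + A12 y⟫ : ℂ) - (⟪(y : Hm), A21 x + A22 y⟫ : ℂ)).re ≤ 0) →
      μ.re < 0 →
      ∀ x : Dp, ((⟪(x : Hp), A11 x - A12 ⟨R (A21 x), hRmem _⟩⟫ : ℂ)).re ≤ 0) := by
  have hF (x : Dp) : A21 x - A22 ⟨R (A21 x), hRmem _⟩ = -(μ • R (A21 x)) :=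
    sub_map_resolvent_eq_neg_smul A22 hRmem hRright (A21 x)
  have hS (x : Dp) :
      ⟪(x : Hp), A11 x - A12 ⟨R (A21 x), hRmem _⟩⟫ =
        kreinForm A11 A12 A21 A22 x (-⟨R (A21 x), hRmem _⟩) + μ * ⟪R (A21 x), R (A21 x)⟫ := by
    rw [kreinForm_neg_right, hF x, inner_neg_right, inner_smul_right]
    ring
  refine ⟨fun x => by rw [← kreinForm_neg_right, ← hS x], fun hdis hμ x => ?_⟩
  rw [hS x, Complex.add_re]
  exact add_nonpos (hdis _ _) (re_mul_inner_self_nonpos hμ.le _)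

/-- With `F = (A₂₂−μ)⁻¹A₂₁` (via the resolvent `R`) and `S = A₁₁ − A₁₂F`, for every
`x₊ ∈ D⁺` one has `(Sx₊, x₊) = (JA(x₊, −Fx₊), (x₊, −Fx₊)) + μ(Fx₊, Fx₊)` (written
with the inner product `(u,v) = ⟪v,u⟫`).  Consequently, if `A` is dissipative in
the Krein space `(H, [·,·])` (`Re(JAv, v) ≤ 0` on `D⁺ ⊕ D⁻`) and `Re μ < 0`, then
`S` with domain `D⁺` is dissipative in `H⁺`. -/
theorem stmt11 (Dp : Submodule ℂ Hp) (Dm : Submodule ℂ Hm)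
    (A11 : Dp →ₗ[ℂ] Hp) (A12 : Dm →ₗ[ℂ] Hp)
    (A21 : Dp →ₗ[ℂ] Hm) (A22 : Dm →ₗ[ℂ] Hm)
    (μ : ℂ) (R : Hm →L[ℂ] Hm)
    (hRmem : ∀ y : Hm, R y ∈ Dm)
    (hRright : ∀ y : Hm, A22 ⟨R y, hRmem y⟩ - μ • R y = y)
    (hRleft : ∀ x : Dm, R (A22 x - μ • (x : Hm)) = (x : Hm)) :
    -- the identity (2.6):
    (∀ x : Dp,
      (⟪(x : Hp), A11 x - A12 ⟨R (A21 x), hRmem _⟩⟫ : ℂ) =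
        ((⟪(x : Hp), A11 x - A12 ⟨R (A21 x), hRmem _⟩⟫ : ℂ)
          + (⟪R (A21 x), A21 x - A22 ⟨R (A21 x), hRmem _⟩⟫ : ℂ))
        + μ * (⟪R (A21 x), R (A21 x)⟫ : ℂ)) ∧
    -- dissipativity of `S` when `A` is `J`-dissipative and `Re μ < 0`:
    ((∀ (x : Dp) (y : Dm),
        ((⟪(x : Hp), A11 x + A12 y⟫ : ℂ) - (⟪(y : Hm), A21 x + A22 y⟫ : ℂ)).re ≤ 0) →
      μ.re < 0 →
      ∀ x : Dp, ((⟪(x : Hp), A11 x - A12 ⟨R (A21 x), hRmem _⟩⟫ : ℂ)).re ≤ 0) :=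
  stmt11_general Dp Dm A11 A12 A21 A22 μ R hRmem hRright
end
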